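/- arXiv:2302.12217 — 9 statements merged into one kernel-verified Lean document; each statement's English description precedes it below -/
import Mathlib

section
/- Let n be a natural number and let 𝒮 be a collection of subsets of ℝⁿ such that every member of 𝒮 is nonempty, convex and relatively open, and such that any two distinct members of 𝒮 are disjoint. Then the relation on 𝒮 defined by E ≤ E' if and only if E ⊆ closure(E') is a partial order: it is reflexive, transitive and antisymmetric. (Abstract form of Proposition 3.1: TF-equivalence classes of a finite-dimensional algebra are pairwise disjoint, convex and relatively open, so the closure relation partially orders them.) -/
open Set

/-- From relative openness, extract a metric neighborhood within the affine span. -/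
private lemma relopen_ball {n : ℕ} {C : Set (EuclideanSpace ℝ (Fin n))}
    (h : C = intrinsicInterior ℝ C) {c : EuclideanSpace ℝ (Fin n)} (hc : c ∈ C) :
    ∃ ε > 0, ∀ w ∈ affineSpan ℝ C, dist w c < ε → w ∈ C := by
  rw [h] at hc
  obtain ⟨y, hy, rfl⟩ := hc
  rw [mem_interior_iff_mem_nhds, Metric.mem_nhds_iff] at hy
  obtain ⟨ε, hε, hball⟩ := hy
  refine ⟨ε, hε, fun w hw hdist => ?_⟩
  have : (⟨w, hw⟩ : affineSpan ℝ C) ∈ Metric.ball y ε := by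
    rw [Metric.mem_ball, Subtype.dist_eq]
    exact hdist
  exact hball this

/-- Segment lemma: if `C` is convex and relatively open, `x ∈ C`, `y ∈ closure C`,
then the open segment from `x` to `y` lies in `C`. -/
private lemma segment_lemma {n : ℕ} {C : Set (EuclideanSpace ℝ (Fin n))}
    (hC : Convex ℝ C) (hro : C = intrinsicInterior ℝ C)
    {x y : EuclideanSpace ℝ (Fin n)} (hx : x ∈ C) (hy : y ∈ closure C) :
    openSegment ℝ x y ⊆ C := by
  rintro z ⟨a, b, ha, hb, hab, rfl⟩
  obtain ⟨ε, hε, hball⟩ := relopen_ball hro hx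
  -- pick y' ∈ C close to y
  obtain ⟨y', hy', hyy'⟩ := Metric.mem_closure_iff.mp hy (a * ε / b) (by positivity)
  -- x' = x + (b/a) • (y - y')
  set x' : EuclideanSpace ℝ (Fin n) := (b / a) • (y - y') + x with hx'def
  have hxS : x ∈ affineSpan ℝ C := subset_affineSpan ℝ C hx
  have hy'S : y' ∈ affineSpan ℝ C := subset_affineSpan ℝ C hy'
  have hyS : y ∈ affineSpan ℝ C := by
    have hclosed : IsClosed ((affineSpan ℝ C : Set (EuclideanSpace ℝ (Fin n)))) :=
      (affineSpan ℝ C).closed_of_finiteDimensional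
    have : closure C ⊆ (affineSpan ℝ C : Set (EuclideanSpace ℝ (Fin n))) := by
      rw [← hclosed.closure_eq]; exact closure_mono (subset_affineSpan ℝ C)
    exact this hy
  have hx'S : x' ∈ affineSpan ℝ C := by
    have := AffineSubspace.smul_vsub_vadd_mem (affineSpan ℝ C) (b / a) hyS hy'S hxS
    simpa [hx'def, vsub_eq_sub, vadd_eq_add] using this
  have hx'C : x' ∈ C := by
    apply hball x' hx'S
    have : dist x' x = (b / a) * dist y y' := by
      rw [hx'def]
      simp only [dist_eq_norm, add_sub_cancel_right]
      rw [norm_smul, Real.norm_eq_abs, abs_of_pos (by positivity)]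
    rw [this]
    calc (b / a) * dist y y' < (b / a) * (a * ε / b) := by
          apply mul_lt_mul_of_pos_left _ (by positivity)
          exact hyy'
      _ = ε := by field_simp
  have key : a • x' + b • y' = a • x + b • y := by
    rw [hx'def, smul_add, smul_smul, mul_div_cancel₀ _ (ne_of_gt ha)]
    module
  rw [← key]
  exact hC hx'C hy' ha.le hb.le hab

/-- Abstract form of Proposition 3.1: on a collection of pairwise disjoint,
nonempty, convex, relatively open subsets of `ℝⁿ`, the relation
`E ≤ E' ↔ E ⊆ closure E'` is a partial order. -/
theorem stmt0 (n : ℕ) (𝒮 : Set (Set (EuclideanSpace ℝ (Fin n))))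
    (hne : ∀ C ∈ 𝒮, C.Nonempty)
    (hconv : ∀ C ∈ 𝒮, Convex ℝ C)
    (hro : ∀ C ∈ 𝒮, C = intrinsicInterior ℝ C)
    (hdisj : ∀ C ∈ 𝒮, ∀ D ∈ 𝒮, C ≠ D → Disjoint C D) :
    (∀ E ∈ 𝒮, E ⊆ closure E) ∧
    (∀ E ∈ 𝒮, ∀ E' ∈ 𝒮, ∀ E'' ∈ 𝒮,
      E ⊆ closure E' → E' ⊆ closure E'' → E ⊆ closure E'') ∧
    (∀ E ∈ 𝒮, ∀ E' ∈ 𝒮, E ⊆ closure E' → E' ⊆ closure E → E = E') := by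
  refine ⟨fun E _ => subset_closure, fun E _ E' _ E'' _ h1 h2 => ?_, ?_⟩
  · calc E ⊆ closure E' := h1
      _ ⊆ closure (closure E'') := closure_mono h2
      _ = closure E'' := closure_closure
  · intro E hE E' hE' h1 h2
    by_contra hne'
    obtain ⟨x, hx⟩ := hne E hE
    obtain ⟨y, hy⟩ := hne E' hE'
    have hmseg : (1/2 : ℝ) • x + (1/2 : ℝ) • y ∈ openSegment ℝ x y :=
      ⟨1/2, 1/2, by norm_num, by norm_num, by norm_num, rfl⟩
    have hmE : (1/2 : ℝ) • x + (1/2 : ℝ) • y ∈ E :=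
      segment_lemma (hconv E hE) (hro E hE) hx (h2 hy) hmseg
    have hmE' : (1/2 : ℝ) • x + (1/2 : ℝ) • y ∈ E' := by
      have h' : (1/2 : ℝ) • x + (1/2 : ℝ) • y ∈ openSegment ℝ y x := by
        rw [openSegment_symm]; exact hmseg
      exact segment_lemma (hconv E' hE') (hro E' hE') hy (h1 hx) h'
    exact (hdisj E hE E' hE' hne').ne_of_mem hmE hmE' rfl
end

section
/- Let C' be a nonempty, convex, relatively open subset of ℝⁿ and let D be a nonempty convex subset of closure(C') that is disjoint from C'. Then the dimension of D is strictly smaller than the dimension of C', i.e. the rank (finrank over ℝ) of the vector span (direction of the affine span) of D is strictly less than that of C'. (This is the dimension argument used to prove antisymmetry in Proposition 3.1.) -/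
open Set Metric

private lemma aux_ball {n : ℕ} {s : Set (EuclideanSpace ℝ (Fin n))}
    {x : EuclideanSpace ℝ (Fin n)} (hx : x ∈ intrinsicInterior ℝ s) :
    ∃ ε > 0, ∀ z ∈ affineSpan ℝ s, dist z x < ε → z ∈ s := by
  obtain ⟨y, hy, rfl⟩ := hx
  obtain ⟨ε, hε, hball⟩ := Metric.mem_nhds_iff.1 (mem_interior_iff_mem_nhds.1 hy)
  refine ⟨ε, hε, fun z hz hd => ?_⟩
  exact hball (show (⟨z, hz⟩ : affineSpan ℝ s) ∈ Metric.ball y ε by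
    simpa [Metric.mem_ball, Subtype.dist_eq] using hd)

/-- Dimension argument used to prove antisymmetry in Proposition 3.1: a nonempty
convex subset of the closure of a nonempty, convex, relatively open set `C'`
which is disjoint from `C'` has strictly smaller dimension. -/
theorem stmt2 (n : ℕ) (C' D : Set (EuclideanSpace ℝ (Fin n)))
    (hC'ne : C'.Nonempty) (hC'conv : Convex ℝ C') (hC'ro : C' = intrinsicInterior ℝ C')
    (hDne : D.Nonempty) (hDconv : Convex ℝ D)
    (hDsub : D ⊆ closure C') (hdisj : Disjoint D C') :
    Module.finrank ℝ (vectorSpan ℝ D) < Module.finrank ℝ (vectorSpan ℝ C') := by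
  have hclos : closure C' ⊆ (affineSpan ℝ C' : Set _) :=
    closure_minimal (subset_affineSpan _ _) (affineSpan ℝ C').closed_of_finiteDimensional
  have hsub1 : D ⊆ (affineSpan ℝ C' : Set _) := hDsub.trans hclos
  have hle : affineSpan ℝ D ≤ affineSpan ℝ C' := affineSpan_le.2 hsub1
  have hvle : vectorSpan ℝ D ≤ vectorSpan ℝ C' := by
    rw [← direction_affineSpan ℝ D, ← direction_affineSpan ℝ C']
    exact AffineSubspace.direction_le hle
  refine lt_of_le_of_ne (Submodule.finrank_mono hvle) fun heq => ?_
  have hveq : vectorSpan ℝ D = vectorSpan ℝ C' :=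
    Submodule.eq_of_le_of_finrank_eq hvle heq
  -- the affine spans coincide
  obtain ⟨d0, hd0⟩ := hDne
  have hspan : affineSpan ℝ D = affineSpan ℝ C' := by
    refine AffineSubspace.ext_of_direction_eq ?_ ⟨d0, mem_affineSpan ℝ hd0, hsub1 hd0⟩
    rw [direction_affineSpan, direction_affineSpan, hveq]
  -- pick a relative interior point of D
  obtain ⟨d, hdInt⟩ := Set.Nonempty.intrinsicInterior hDconv ⟨d0, hd0⟩
  have hdD : d ∈ D := intrinsicInterior_subset hdInt
  obtain ⟨c, hc⟩ := hC'ne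
  have hcInt : c ∈ intrinsicInterior ℝ C' := hC'ro ▸ hc
  obtain ⟨ε, hε, hεball⟩ := aux_ball hdInt
  obtain ⟨δ, hδ, hδball⟩ := aux_ball hcInt
  have hdc : d ≠ c := fun h => Set.disjoint_left.1 hdisj hdD (h ▸ hc)
  have hnorm : (0:ℝ) < ‖d - c‖ := by
    rw [norm_pos_iff]; exact sub_ne_zero.2 hdc
  set t : ℝ := ε / (2 * ‖d - c‖) with ht_def
  have ht : 0 < t := div_pos hε (by positivity)
  have ht0 : t ≠ 0 := ne_of_gt ht
  have h1t : (0:ℝ) < 1 + t := by linarith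
  have h1t0 : (1:ℝ) + t ≠ 0 := ne_of_gt h1t
  set e : EuclideanSpace ℝ (Fin n) := d + t • (d - c) with he_def
  have hdspan : d ∈ affineSpan ℝ C' := hsub1 hdD
  have hcspan : c ∈ affineSpan ℝ C' := subset_affineSpan ℝ C' hc
  have he_span : e ∈ affineSpan ℝ C' := by
    have := (affineSpan ℝ C').smul_vsub_vadd_mem t hdspan hcspan hdspan
    simpa [he_def, vsub_eq_sub, vadd_eq_add, add_comm] using this
  have hdist : dist e d < ε := by
    have : dist e d = t * ‖d - c‖ := by
      rw [dist_eq_norm]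
      simp [he_def, norm_smul, abs_of_pos ht]
    rw [this, ht_def, div_mul_eq_mul_div, mul_comm (2:ℝ) ‖d - c‖, ← div_div,
      mul_div_assoc, div_self (ne_of_gt hnorm), mul_one]
    linarith
  have heD : e ∈ D := hεball e (by rw [hspan]; exact he_span) hdist
  have heC : e ∈ closure C' := hDsub heD
  -- pick e' ∈ C' close to e
  obtain ⟨e', he'C, he'dist⟩ := Metric.mem_closure_iff.1 heC (t * δ) (by positivity)
  set c'' : EuclideanSpace ℝ (Fin n) := c + t⁻¹ • (e - e') with hc''_def
  have he'span : e' ∈ affineSpan ℝ C' := subset_affineSpan ℝ C' he'C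
  have hc''span : c'' ∈ affineSpan ℝ C' := by
    have := (affineSpan ℝ C').smul_vsub_vadd_mem t⁻¹ he_span he'span hcspan
    simpa [hc''_def, vsub_eq_sub, vadd_eq_add, add_comm] using this
  have hc''dist : dist c'' c < δ := by
    have h1 : dist c'' c = t⁻¹ * ‖e - e'‖ := by
      rw [dist_eq_norm]
      simp [hc''_def, norm_smul, abs_of_pos (inv_pos.2 ht), ht.le]
    have h2 : ‖e - e'‖ < t * δ := by rwa [← dist_eq_norm]
    rw [h1]
    calc t⁻¹ * ‖e - e'‖ < t⁻¹ * (t * δ) := by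
          exact mul_lt_mul_of_pos_left h2 (inv_pos.2 ht)
      _ = δ := by field_simp
  have hc''C : c'' ∈ C' := hδball c'' hc''span hc''dist
  -- d is a convex combination of c'' and e'
  have ha : (0:ℝ) < t / (1 + t) := div_pos ht h1t
  have hb : (0:ℝ) < 1 / (1 + t) := div_pos one_pos h1t
  have hab : t / (1 + t) + 1 / (1 + t) = 1 := by field_simp; ring
  have hcombo : (t / (1 + t)) • c'' + (1 / (1 + t)) • e' = d := by
    rw [hc''_def, he_def]
    match_scalars <;> field_simp <;> ring
  have hdC : d ∈ C' := by
    rw [← hcombo]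
    exact hC'conv hc''C he'C ha.le hb.le hab
  exact Set.disjoint_left.1 hdisj hdD hdC
end

section
/- Let g : Fin t → ℝⁿ be a linearly independent family of vectors and let I, J ⊆ Fin t. Then the open simplicial cone C_I is contained in the closure of the open simplicial cone C_J if and only if I ⊆ J. (This is the geometric content of the face relation between cones of τ-rigid pairs used in the proof of Lemma 3.4: 𝒞_{(M,P)} ⊆ 𝒞̄_{(M',P')} precisely when (M,P) is a direct summand of (M',P').) -/
/-- The open simplicial cone on the vectors `g i`, `i ∈ I`. -/
def openCone {n t : ℕ} (g : Fin t → EuclideanSpace ℝ (Fin n)) (I : Finset (Fin t)) :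
    Set (EuclideanSpace ℝ (Fin n)) :=
  {x | ∃ α : Fin t → ℝ, (∀ i ∈ I, 0 < α i) ∧ x = ∑ i ∈ I, α i • g i}

/-- Face relation between the simplicial cones of a linearly independent family:
`C_I ⊆ closure C_J` if and only if `I ⊆ J` (geometric content of Lemma 3.4). -/
theorem stmt4 (n t : ℕ) (g : Fin t → EuclideanSpace ℝ (Fin n))
    (hg : LinearIndependent ℝ g) (I J : Finset (Fin t)) :
    openCone g I ⊆ closure (openCone g J) ↔ I ⊆ J := by
  constructor
  · intro h i hiI
    by_contra hiJ
    set K := Submodule.span ℝ (Set.range g) with hK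
    haveI : FiniteDimensional ℝ K := FiniteDimensional.span_of_finite ℝ (Set.finite_range g)
    let b := Module.Basis.span hg
    let φ : EuclideanSpace ℝ (Fin n) →L[ℝ] ℝ :=
      (LinearMap.toContinuousLinearMap (b.coord i)).comp
        (K.orthogonalProjectionOnto : EuclideanSpace ℝ (Fin n) →L[ℝ] K)
    have hφg : ∀ k, φ (g k) = if k = i then 1 else 0 := by
      intro k
      have hmem : g k ∈ K := Submodule.subset_span (Set.mem_range_self k)
      have h1 : ((K.orthogonalProjectionOnto (g k)) : EuclideanSpace ℝ (Fin n)) = g k :=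
        Submodule.starProjection_eq_self_iff.mpr hmem
      have h2 : K.orthogonalProjectionOnto (g k) = b k :=
        Subtype.ext (by rw [h1]; exact congrArg Subtype.val (Module.Basis.span_apply hg k).symm)
      simp only [φ, ContinuousLinearMap.comp_apply, h2]
      simp [Module.Basis.coord_apply, Module.Basis.repr_self, Finsupp.single_apply]
    have hzero : ∀ y ∈ openCone g J, φ y = 0 := by
      rintro y ⟨α, hα, rfl⟩
      simp only [map_sum, map_smul, hφg]
      apply Finset.sum_eq_zero
      intro j hj
      have : j ≠ i := fun h => hiJ (h ▸ hj)
      simp [this]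
    have hx : (∑ i' ∈ I, (1:ℝ) • g i') ∈ openCone g I := ⟨fun _ => 1, fun _ _ => one_pos, rfl⟩
    have hxc := h hx
    have : φ (∑ i' ∈ I, (1:ℝ) • g i') = 0 := by
      have hcl : closure (openCone g J) ⊆ φ ⁻¹' {0} :=
        closure_minimal (fun y hy => hzero y hy) (isClosed_singleton.preimage φ.continuous)
      exact hcl hxc
    rw [map_sum] at this
    simp only [map_smul, hφg, one_smul, smul_eq_mul, one_mul] at this
    rw [Finset.sum_ite_eq' I i (fun _ => (1:ℝ))] at this
    simp [hiI] at this
  · rintro hIJ x ⟨α, hα, rfl⟩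
    set v := ∑ j ∈ J \ I, g j with hv
    have hform : ∀ k : ℕ, (∑ i ∈ I, α i • g i) + (1/(k+1 : ℝ)) • v ∈ openCone g J := by
      intro k
      refine ⟨fun j => if j ∈ I then α j else 1/(k+1 : ℝ), ?_, ?_⟩
      · intro j hj
        by_cases hjI : j ∈ I
        · simpa [hjI] using hα j hjI
        · simp only [hjI, if_false]
          positivity
      · rw [← Finset.sum_sdiff hIJ]
        rw [hv, Finset.smul_sum]
        rw [add_comm]
        congr 1
        · exact Finset.sum_congr rfl (fun j hj => by
            simp [Finset.mem_sdiff.mp hj |>.2])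
        · exact Finset.sum_congr rfl (fun j hj => by simp [hj])
    have h0 : Filter.Tendsto (fun k : ℕ => (1/(k+1 : ℝ)) • v) Filter.atTop (nhds 0) := by
      have := tendsto_one_div_add_atTop_nhds_zero_nat (𝕜 := ℝ)
      simpa using this.smul_const v
    have htend : Filter.Tendsto (fun k : ℕ => (∑ i ∈ I, α i • g i) + (1/(k+1 : ℝ)) • v)
        Filter.atTop (nhds (∑ i ∈ I, α i • g i)) := by
      have := (tendsto_const_nhds (x := ∑ i ∈ I, α i • g i) (f := Filter.atTop (α := ℕ))).add h0
      simpa using this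
    exact mem_closure_of_tendsto htend (Filter.Eventually.of_forall hform)
end

section
/- In the projection setup, for every v ∈ ℝⁿ one has ν(v) = Σ_{j : Fin m} (⟨v, x j⟩ / d j) • ν(g ĵ), where ĵ : Fin n denotes the index with (ĵ : ℕ) = (j : ℕ). (This is the formula for the orthogonal projection established in the proof of Lemma 3.8.) -/
/-!
Expand `v` in the basis `g`. Pairing with `x j` picks out the coordinate of `v` at `ĵ`, which
is therefore `⟪v, x j⟫ / d j`, and the projection onto `Vᗮ` kills every `g i` with `m ≤ i`,
so only the terms with `i = ĵ` survive.
-/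

open RealInnerProductSpace

namespace Module.Basis

theorem map_eq_sum_repr_of_map_eq_zero {ι κ R M N : Type*} [Fintype ι] [Fintype κ] [Semiring R]
    [AddCommMonoid M] [Module R M] [AddCommMonoid N] [Module R N]
    (b : Basis ι R M) (f : M →ₗ[R] N) {e : κ → ι} (he : Function.Injective e)
    (hf : ∀ i ∉ Set.range e, f (b i) = 0) (v : M) :
    f v = ∑ j, b.repr v (e j) • f (b (e j)) := by
  conv_lhs => rw [← b.sum_repr v]
  simp only [map_sum, map_smul]
  exact (Fintype.sum_of_injective e he _ _ (fun i hi => by rw [hf i hi, smul_zero])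
    fun _ => rfl).symm

variable {ι E : Type*} [DecidableEq ι] [NormedAddCommGroup E] [InnerProductSpace ℝ E]

theorem repr_apply_eq_inner_div (b : Basis ι ℝ E) {y : E} {k : ι} {c : ℝ} (hc : c ≠ 0)
    (hy : ∀ i, ⟪b i, y⟫ = if i = k then c else 0) (v : E) :
    b.repr v k = ⟪v, y⟫ / c := by
  have h : (innerₗ E).flip y = c • b.coord k :=
    b.ext fun i => by
      simp only [LinearMap.flip_apply, innerₗ_apply_apply, LinearMap.smul_apply, coord_apply,
        repr_self, Finsupp.single_apply, smul_eq_mul, mul_ite, mul_one, mul_zero, hy]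
  have hv : ⟪v, y⟫ = c * b.repr v k := LinearMap.congr_fun h v
  rw [hv, mul_div_cancel_left₀ _ hc]

end Module.Basis

theorem stmt6_general (n m : ℕ) (hmn : m ≤ n)
    (g : Fin n → EuclideanSpace ℝ (Fin n))
    (hg : LinearIndependent ℝ g)
    (hgspan : Submodule.span ℝ (Set.range g) = ⊤)
    (x : Fin m → EuclideanSpace ℝ (Fin n)) (d : Fin m → ℝ)
    (hd : ∀ j, 0 < d j)
    (hpair : ∀ (i : Fin n) (j : Fin m),
      ⟪g i, x j⟫ = if (i : ℕ) = (j : ℕ) then d j else 0)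
    (V : Submodule ℝ (EuclideanSpace ℝ (Fin n)))
    (hV : V = Submodule.span ℝ {v | ∃ i : Fin n, m ≤ (i : ℕ) ∧ v = g i})
    (ν : EuclideanSpace ℝ (Fin n) → EuclideanSpace ℝ (Fin n))
    (hν : ∀ v, ν v = (Submodule.orthogonalProjectionOnto Vᗮ v : EuclideanSpace ℝ (Fin n))) :
    ∀ v, ν v = ∑ j : Fin m, (⟪v, x j⟫ / d j) • ν (g (Fin.castLE hmn j)) := by
  intro v
  have hν' : ν = Vᗮ.starProjection := funext hν
  let b := Module.Basis.mk hg hgspan.ge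
  have hb (i : Fin n) : b i = g i := Module.Basis.mk_apply hg _ i
  have hrepr (j : Fin m) : b.repr v (Fin.castLE hmn j) = ⟪v, x j⟫ / d j :=
    b.repr_apply_eq_inner_div (hd j).ne' (fun i => by simp [hb, hpair, Fin.ext_iff]) v
  have hker : ∀ i ∉ Set.range (Fin.castLE hmn), Vᗮ.starProjection (b i) = 0 := by
    rw [Fin.range_castLE]
    intro i hi
    exact Submodule.starProjection_orthogonal_apply_eq_zero
      (hV ▸ Submodule.subset_span ⟨i, not_lt.1 hi, hb i⟩)
  rw [hν']
  refine (b.map_eq_sum_repr_of_map_eq_zero Vᗮ.starProjection.toLinearMap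
    (Fin.castLE_injective hmn) hker v).trans ?_
  simp only [hrepr, hb, ContinuousLinearMap.coe_coe]

/-- Formula for the orthogonal projection established in the proof of
Lemma 3.8: `ν(v) = Σ_j (⟨v, x j⟩ / d j) • ν(g ĵ)`. -/
theorem stmt6 (n m : ℕ) (hn : 0 < n) (hmn : m ≤ n)
    (g : Fin n → EuclideanSpace ℝ (Fin n))
    (hg : LinearIndependent ℝ g)
    (hgspan : Submodule.span ℝ (Set.range g) = ⊤)
    (x : Fin m → EuclideanSpace ℝ (Fin n)) (d : Fin m → ℝ)
    (hd : ∀ j, 0 < d j)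
    (hpair : ∀ (i : Fin n) (j : Fin m),
      ⟪g i, x j⟫ = if (i : ℕ) = (j : ℕ) then d j else 0)
    (V : Submodule ℝ (EuclideanSpace ℝ (Fin n)))
    (hV : V = Submodule.span ℝ {v | ∃ i : Fin n, m ≤ (i : ℕ) ∧ v = g i})
    (ν : EuclideanSpace ℝ (Fin n) → EuclideanSpace ℝ (Fin n))
    (hν : ∀ v, ν v = (Submodule.orthogonalProjectionOnto Vᗮ v : EuclideanSpace ℝ (Fin n))) :
    ∀ v, ν v = ∑ j : Fin m, (⟪v, x j⟫ / d j) • ν (g (Fin.castLE hmn j)) :=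
  stmt6_general n m hmn g hg hgspan x d hd hpair V hV ν hν
end

section
/- In the projection setup, every vector x j lies in Vᗮ, the family (x j)_{j : Fin m} is linearly independent, and it spans Vᗮ; hence (x j) is a basis of Vᗮ. (This corresponds to Lemma 3.6: the dimension vectors of the simple objects of the wide subcategory 𝒲_E form a basis of span(E)^⊥.) -/
open RealInnerProductSpace

/-!
Let `e = Fin.castLE` be the inclusion of indices, so that `V` is spanned by the `g i` with
`i ∉ range e`. The pairing conditions make `x` biorthogonal to `g ∘ e`, hence linearly independent,
and orthogonal to the `g i` spanning `V`, so `span x ≤ Vᗮ`. The map `v ↦ (⟪g (e j), v⟫)ⱼ` is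
injective on `Vᗮ`, since a vector of `Vᗮ` in its kernel is orthogonal to every `g i` and hence
zero; so `dim Vᗮ ≤ m = dim (span x)`.
-/

open Submodule Module Set Function

section Biorthogonal

variable {E ι κ : Type*} [NormedAddCommGroup E] [InnerProductSpace ℝ E]

theorem eq_zero_of_inner_eq_zero_of_span_eq_top {g : ι → E} (hg : span ℝ (range g) = ⊤)
    {w : E} (hw : ∀ i, ⟪g i, w⟫ = 0) : w = 0 := by
  have hortho : span ℝ (range g) ⟂ span ℝ {w} :=
    isOrtho_span.2 (by rintro _ ⟨i, rfl⟩ _ rfl; exact hw i)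
  rwa [hg, isOrtho_top_left, span_singleton_eq_bot] at hortho

noncomputable def innerPi (y : κ → E) : E →ₗ[ℝ] κ → ℝ :=
  LinearMap.pi fun j => innerₗ E (y j)

@[simp]
theorem innerPi_apply (y : κ → E) (v : E) (j : κ) : innerPi y v j = ⟪y j, v⟫ :=
  rfl

variable {g : ι → E} {x : κ → E} {e : κ → ι} {d : κ → ℝ}

theorem finrank_orthogonal_span_image_compl_range_le [FiniteDimensional ℝ E] [Fintype κ]
    (hg : span ℝ (range g) = ⊤) :
    finrank ℝ (span ℝ (g '' (range e)ᶜ))ᗮ ≤ Fintype.card κ := by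
  have hinj : Injective ((innerPi (g ∘ e)).domRestrict (span ℝ (g '' (range e)ᶜ))ᗮ) := by
    rw [← LinearMap.ker_eq_bot, LinearMap.ker_eq_bot']
    rintro ⟨w, hw⟩ hpw
    refine Subtype.ext (eq_zero_of_inner_eq_zero_of_span_eq_top hg fun i => ?_)
    by_cases hi : i ∈ range e
    · obtain ⟨j, rfl⟩ := hi
      exact congr_fun hpw j
    · exact inner_right_of_mem_orthogonal (subset_span (mem_image_of_mem g hi)) hw
  simpa using LinearMap.finrank_le_finrank_of_injective hinj

variable [DecidableEq ι]

theorem span_range_le_orthogonal_of_inner_eq_ite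
    (hpair : ∀ i j, ⟪g i, x j⟫ = if i = e j then d j else 0) :
    span ℝ (range x) ≤ (span ℝ (g '' (range e)ᶜ))ᗮ := by
  refine (isOrtho_span.2 ?_).ge
  rintro _ ⟨i, hi, rfl⟩ _ ⟨j, rfl⟩
  rw [hpair, if_neg fun h => hi ⟨j, h.symm⟩]

theorem linearIndependent_of_inner_eq_ite (he : Injective e) (hd : ∀ j, d j ≠ 0)
    (hpair : ∀ i j, ⟪g i, x j⟫ = if i = e j then d j else 0) :
    LinearIndependent ℝ x := by
  classical
  have hcomp : innerPi (g ∘ e) ∘ x = fun k => Pi.single k (d k) := by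
    ext k j
    simp [hpair, he.eq_iff, Pi.single_apply]
  exact LinearIndependent.of_comp _ (hcomp ▸ Pi.linearIndependent_single_of_ne_zero hd)

theorem span_range_eq_orthogonal_of_inner_eq_ite [FiniteDimensional ℝ E] [Fintype κ]
    (he : Injective e) (hd : ∀ j, d j ≠ 0) (hg : span ℝ (range g) = ⊤)
    (hpair : ∀ i j, ⟪g i, x j⟫ = if i = e j then d j else 0) :
    span ℝ (range x) = (span ℝ (g '' (range e)ᶜ))ᗮ := by
  refine eq_of_le_of_finrank_le (span_range_le_orthogonal_of_inner_eq_ite hpair) ?_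
  rw [finrank_span_eq_card (linearIndependent_of_inner_eq_ite he hd hpair)]
  exact finrank_orthogonal_span_image_compl_range_le hg

end Biorthogonal

theorem stmt8_general (n m : ℕ) (hmn : m ≤ n)
    (g : Fin n → EuclideanSpace ℝ (Fin n))
    (hgspan : Submodule.span ℝ (Set.range g) = ⊤)
    (x : Fin m → EuclideanSpace ℝ (Fin n)) (d : Fin m → ℝ)
    (hd : ∀ j, 0 < d j)
    (hpair : ∀ (i : Fin n) (j : Fin m),
      ⟪g i, x j⟫ = if (i : ℕ) = (j : ℕ) then d j else 0)
    (V : Submodule ℝ (EuclideanSpace ℝ (Fin n)))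
    (hV : V = Submodule.span ℝ {v | ∃ i : Fin n, m ≤ (i : ℕ) ∧ v = g i}) :
    (∀ j, x j ∈ Vᗮ) ∧
    LinearIndependent ℝ x ∧
    Submodule.span ℝ (Set.range x) = Vᗮ := by
  have hpair' : ∀ i j, ⟪g i, x j⟫ = if i = Fin.castLE hmn j then d j else 0 := by
    simpa only [Fin.ext_iff, Fin.val_castLE] using hpair
  have hV' : V = span ℝ (g '' (range (Fin.castLE hmn))ᶜ) := by
    rw [hV, Fin.range_castLE]
    congr 1
    ext v
    simp [eq_comm]
  have hd' : ∀ j, d j ≠ 0 := fun j => (hd j).ne'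
  have hspan := span_range_eq_orthogonal_of_inner_eq_ite (Fin.castLE_injective hmn) hd' hgspan hpair'
  rw [hV']
  exact ⟨fun j => hspan ▸ subset_span ⟨j, rfl⟩,
    linearIndependent_of_inner_eq_ite (Fin.castLE_injective hmn) hd' hpair', hspan⟩

/-- Lemma 3.6: the vectors `x j` (the dimension vectors of the simple objects
of the wide subcategory) all lie in `Vᗮ`, are linearly independent, and span
`Vᗮ`; hence they form a basis of `Vᗮ`. -/
theorem stmt8 (n m : ℕ) (hn : 0 < n) (hmn : m ≤ n)
    (g : Fin n → EuclideanSpace ℝ (Fin n))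
    (hg : LinearIndependent ℝ g)
    (hgspan : Submodule.span ℝ (Set.range g) = ⊤)
    (x : Fin m → EuclideanSpace ℝ (Fin n)) (d : Fin m → ℝ)
    (hd : ∀ j, 0 < d j)
    (hpair : ∀ (i : Fin n) (j : Fin m),
      ⟪g i, x j⟫ = if (i : ℕ) = (j : ℕ) then d j else 0)
    (V : Submodule ℝ (EuclideanSpace ℝ (Fin n)))
    (hV : V = Submodule.span ℝ {v | ∃ i : Fin n, m ≤ (i : ℕ) ∧ v = g i})
    (ν : EuclideanSpace ℝ (Fin n) → EuclideanSpace ℝ (Fin n))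
    (hν : ∀ v, ν v = (Submodule.orthogonalProjectionOnto Vᗮ v : EuclideanSpace ℝ (Fin n))) :
    (∀ j, x j ∈ Vᗮ) ∧
    LinearIndependent ℝ x ∧
    Submodule.span ℝ (Set.range x) = Vᗮ :=
  stmt8_general n m hmn g hgspan x d hd hpair V hV
end

section
/- In the projection setup, define the linear map π : ℝⁿ → ℝ^m by π(v)_j = ⟨v, x j⟩ / d j. Then: (1) the kernel of π equals V; (2) π(v) = π(ν(v)) for all v ∈ ℝⁿ; and (3) the restriction of π to Vᗮ is a linear bijection onto ℝ^m. (This is the factorisation π_E = ρ_E ∘ ν_E with ρ_E an isomorphism, established in the proof of Lemma 3.8 and used to prove that ν_E(F) = ν_{E'}(F') if and only if π_E(F) = π_{E'}(F').) -/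
open RealInnerProductSpace

/-! In the basis `g`, the pairing condition says that `π v` lists the first `m` coordinates of `v`.
So `π` is surjective with kernel spanned by the remaining basis vectors, i.e. `V`. Any linear map
factors through the orthogonal projection onto the complement of its kernel, and it is injective
there. -/

namespace Module.Basis

variable {ι κ R M : Type*}

theorem mem_span_image_compl_range_iff [Semiring R] [AddCommMonoid M] [Module R M]
    (b : Basis ι R M) (e : κ → ι) {v : M} :
    v ∈ Submodule.span R (b '' (Set.range e)ᶜ) ↔ ∀ j, b.repr v (e j) = 0 := by
  rw [b.mem_span_image, ← Set.subset_compl_comm, Set.range_subset_iff]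
  simp

theorem exists_repr_comp_eq [Finite ι] [CommSemiring R] [AddCommMonoid M] [Module R M]
    (b : Basis ι R M) {e : κ → ι} (he : Function.Injective e) (y : κ → R) :
    ∃ v, ∀ j, b.repr v (e j) = y j :=
  ⟨b.equivFun.symm (Function.extend e y 0), fun j => by
    rw [← b.equivFun_apply, b.equivFun.apply_symm_apply, he.extend_apply]⟩

theorem inner_eq_repr_mul_of_inner_eq_ite [DecidableEq ι] {E : Type*} [NormedAddCommGroup E]
    [InnerProductSpace ℝ E] (b : Basis ι ℝ E) {y : E} {i₀ : ι} {c : ℝ}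
    (h : ∀ i, ⟪b i, y⟫ = if i = i₀ then c else 0) (v : E) :
    ⟪v, y⟫ = b.repr v i₀ * c := by
  have : (innerₛₗ ℝ).flip y = c • b.coord i₀ := b.ext fun i => by
    simp [h, Finsupp.single_apply, eq_comm]
  simpa [mul_comm] using LinearMap.congr_fun this v

end Module.Basis

namespace LinearMap

variable {E F : Type*} [NormedAddCommGroup E] [InnerProductSpace ℝ E] [AddCommGroup F]
  [Module ℝ F] (f : E →ₗ[ℝ] F)

theorem map_starProjection_orthogonal_ker [(ker f).HasOrthogonalProjection] (v : E) :
    f ((ker f)ᗮ.starProjection v) = f v := by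
  rw [Submodule.starProjection_orthogonal_val, map_sub,
    mem_ker.mp ((ker f).starProjection_apply_mem v), sub_zero]

theorem injOn_orthogonal_ker : Set.InjOn f (ker f)ᗮ := fun u hu w hw huw => by
  have hker : u - w ∈ ker f := by rw [mem_ker, map_sub, huw, sub_self]
  exact sub_eq_zero.mp <| (ker f).inf_orthogonal_eq_bot.le ⟨hker, sub_mem hu hw⟩

theorem bijOn_orthogonal_ker [(ker f).HasOrthogonalProjection] (hf : Function.Surjective f) :
    Set.BijOn f (ker f)ᗮ Set.univ := by
  refine ⟨Set.mapsTo_univ _ _, f.injOn_orthogonal_ker, fun y _ => ?_⟩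
  obtain ⟨v, rfl⟩ := hf y
  exact ⟨_, Submodule.starProjection_apply_mem _ v, f.map_starProjection_orthogonal_ker v⟩

end LinearMap

theorem stmt10_general (n m : ℕ) (hmn : m ≤ n)
    (g : Fin n → EuclideanSpace ℝ (Fin n))
    (hg : LinearIndependent ℝ g)
    (hgspan : Submodule.span ℝ (Set.range g) = ⊤)
    (x : Fin m → EuclideanSpace ℝ (Fin n)) (d : Fin m → ℝ)
    (hd : ∀ j, 0 < d j)
    (hpair : ∀ (i : Fin n) (j : Fin m),
      ⟪g i, x j⟫ = if (i : ℕ) = (j : ℕ) then d j else 0)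
    (V : Submodule ℝ (EuclideanSpace ℝ (Fin n)))
    (hV : V = Submodule.span ℝ {v | ∃ i : Fin n, m ≤ (i : ℕ) ∧ v = g i})
    (ν : EuclideanSpace ℝ (Fin n) → EuclideanSpace ℝ (Fin n))
    (hν : ∀ v, ν v = (Submodule.orthogonalProjectionOnto Vᗮ v : EuclideanSpace ℝ (Fin n)))
    (π : EuclideanSpace ℝ (Fin n) →ₗ[ℝ] EuclideanSpace ℝ (Fin m))
    (hπ : ∀ (v : EuclideanSpace ℝ (Fin n)) (j : Fin m), π v j = ⟪v, x j⟫ / d j) :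
    LinearMap.ker π = V ∧
    (∀ v, π v = π (ν v)) ∧
    Set.BijOn π (Vᗮ : Set (EuclideanSpace ℝ (Fin n))) Set.univ := by
  let b := Module.Basis.mk hg hgspan.ge
  have hπb (v j) : π v j = b.repr v (Fin.castLE hmn j) := by
    refine (hπ v j).trans ?_
    rw [b.inner_eq_repr_mul_of_inner_eq_ite (fun i => ?_) v, mul_div_cancel_right₀ _ (hd j).ne']
    simp [b, hpair, Fin.ext_iff]
  have hker : LinearMap.ker π = V := by
    have hgV : {v | ∃ i : Fin n, m ≤ (i : ℕ) ∧ v = g i} =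
        b '' (Set.range (Fin.castLE hmn))ᶜ := by
      ext; simp [b, Fin.range_castLE, eq_comm]
    ext v
    simp only [hV, hgV, b.mem_span_image_compl_range_iff, LinearMap.mem_ker, ← hπb]
    exact ⟨fun h j => by simp [h], fun h => PiLp.ext h⟩
  have hsurj : Function.Surjective π := fun y => by
    obtain ⟨v, hv⟩ := b.exists_repr_comp_eq (Fin.castLE_injective hmn) y
    exact ⟨v, PiLp.ext fun j => (hπb v j).trans (hv j)⟩
  subst hker
  refine ⟨rfl, fun v => ?_, π.bijOn_orthogonal_ker hsurj⟩
  rw [hν, ← Submodule.starProjection_apply, π.map_starProjection_orthogonal_ker]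

/-- Factorisation `π_E = ρ_E ∘ ν_E` from the proof of Lemma 3.8: the linear
map `π(v)_j = ⟨v, x j⟩ / d j` has kernel `V`, factors through the orthogonal
projection `ν`, and restricts to a linear bijection from `Vᗮ` onto `ℝ^m`. -/
theorem stmt10 (n m : ℕ) (hn : 0 < n) (hmn : m ≤ n)
    (g : Fin n → EuclideanSpace ℝ (Fin n))
    (hg : LinearIndependent ℝ g)
    (hgspan : Submodule.span ℝ (Set.range g) = ⊤)
    (x : Fin m → EuclideanSpace ℝ (Fin n)) (d : Fin m → ℝ)
    (hd : ∀ j, 0 < d j)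
    (hpair : ∀ (i : Fin n) (j : Fin m),
      ⟪g i, x j⟫ = if (i : ℕ) = (j : ℕ) then d j else 0)
    (V : Submodule ℝ (EuclideanSpace ℝ (Fin n)))
    (hV : V = Submodule.span ℝ {v | ∃ i : Fin n, m ≤ (i : ℕ) ∧ v = g i})
    (ν : EuclideanSpace ℝ (Fin n) → EuclideanSpace ℝ (Fin n))
    (hν : ∀ v, ν v = (Submodule.orthogonalProjectionOnto Vᗮ v : EuclideanSpace ℝ (Fin n)))
    (π : EuclideanSpace ℝ (Fin n) →ₗ[ℝ] EuclideanSpace ℝ (Fin m))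
    (hπ : ∀ (v : EuclideanSpace ℝ (Fin n)) (j : Fin m), π v j = ⟪v, x j⟫ / d j) :
    LinearMap.ker π = V ∧
    (∀ v, π v = π (ν v)) ∧
    Set.BijOn π (Vᗮ : Set (EuclideanSpace ℝ (Fin n))) Set.univ :=
  stmt10_general n m hmn g hg hgspan x d hd hpair V hV ν hν π hπ
end

section
/- In the cone-projection setup, for every w ∈ F and every u in the image ν(G) of G under the projection ν, there exists ε > 0 such that w + ε • u ∈ G. (This is the key perturbation step in the proof of Lemma 3.10: the vectors in ν_F(G) are those orthogonal to F which point into G from any point of F.) -/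
open RealInnerProductSpace

/-!
Write `w = ∑ aᵢ gᵢ` with `a` positive on the first `k` indices and zero elsewhere, and
`u = ν x` with `x = ∑ βᵢ gᵢ ∈ G`. Then `x - u` lies in `W`, so `x - u = ∑ cᵢ gᵢ` with `c`
supported on the first `k` indices, and `w + ε u = ∑ (aᵢ + ε (βᵢ - cᵢ)) gᵢ`. For `i < k` the
coefficient tends to `aᵢ > 0` as `ε → 0`; for `i ≥ k` it is `ε βᵢ > 0`.
-/

open Filter Topology

theorem Submodule.exists_fun_eq_sum_of_mem_span_image {R M ι : Type*} [Semiring R]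
    [AddCommMonoid M] [Module R M] [Fintype ι] {v : ι → M} {s : Set ι} {x : M}
    (hx : x ∈ Submodule.span R (v '' s)) :
    ∃ c : ι → R, (∀ i ∉ s, c i = 0) ∧ ∑ i, c i • v i = x := by
  obtain ⟨l, hls, rfl⟩ := (Finsupp.mem_span_image_iff_linearCombination R).1 hx
  refine ⟨l, fun i hi => (Finsupp.mem_supported' R l).1 hls i hi, ?_⟩
  rw [Finsupp.linearCombination_apply, Finsupp.sum_fintype _ _ fun i => zero_smul R (v i)]

theorem Submodule.sub_orthogonalProjectionOnto_orthogonal_mem {𝕜 E : Type*} [RCLike 𝕜]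
    [NormedAddCommGroup E] [InnerProductSpace 𝕜 E] (K : Submodule 𝕜 E)
    [K.HasOrthogonalProjection] (x : E) :
    x - (Kᗮ.orthogonalProjectionOnto x : E) ∈ K := by
  rw [Submodule.coe_orthogonalProjectionOnto_apply, Submodule.starProjection_orthogonal_val,
    sub_sub_cancel]
  exact K.starProjection_apply_mem x

theorem eventually_pos_add_mul_sub {ι : Type*} [Finite ι] {a b c : ι → ℝ} (ha : ∀ i, 0 ≤ a i)
    (hb : ∀ i, 0 < b i) (hc : ∀ i, a i = 0 → c i = 0) :
    ∀ᶠ ε in 𝓝[>] 0, ∀ i, 0 < a i + ε * (b i - c i) := by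
  refine eventually_all.2 fun i => ?_
  rcases (ha i).eq_or_lt with hai | hai
  · -- off the support of `a` the coefficient is `ε * b i`
    filter_upwards [self_mem_nhdsWithin] with ε hε
    rw [← hai, hc i hai.symm, zero_add, sub_zero]
    exact mul_pos hε (hb i)
  · have hlim : Tendsto (fun ε => a i + ε * (b i - c i)) (𝓝[>] 0) (𝓝 (a i)) := by
      have : Tendsto (fun ε => a i + ε * (b i - c i)) (𝓝 0) (𝓝 (a i + 0 * (b i - c i))) :=
        (continuous_const.add (continuous_id.mul continuous_const)).tendsto 0
      simpa using this.mono_left nhdsWithin_le_nhds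
    exact hlim.eventually (eventually_gt_nhds hai)

theorem exists_pos_add_smul_sub_eq_sum_pos {ι M : Type*} [Fintype ι] [AddCommGroup M]
    [Module ℝ M] (g : ι → M) {a b c : ι → ℝ} (ha : ∀ i, 0 ≤ a i) (hb : ∀ i, 0 < b i)
    (hc : ∀ i, a i = 0 → c i = 0) :
    ∃ ε : ℝ, 0 < ε ∧ ∃ δ : ι → ℝ, (∀ i, 0 < δ i) ∧
      ∑ i, a i • g i + ε • (∑ i, b i • g i - ∑ i, c i • g i) = ∑ i, δ i • g i := by
  obtain ⟨ε, hδ, hε⟩ := ((eventually_pos_add_mul_sub ha hb hc).and self_mem_nhdsWithin).exists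
  refine ⟨ε, hε, fun i => a i + ε * (b i - c i), hδ, ?_⟩
  simp only [← Finset.sum_sub_distrib, Finset.smul_sum, ← Finset.sum_add_distrib, add_smul,
    mul_smul, sub_smul]

theorem stmt11_general (n t k : ℕ)
    (g : Fin t → EuclideanSpace ℝ (Fin n))
    (W : Submodule ℝ (EuclideanSpace ℝ (Fin n)))
    (hW : W = Submodule.span ℝ {v | ∃ i : Fin t, (i : ℕ) < k ∧ v = g i})
    (ν : EuclideanSpace ℝ (Fin n) → EuclideanSpace ℝ (Fin n))
    (hν : ∀ v, ν v = (Submodule.orthogonalProjectionOnto Wᗮ v : EuclideanSpace ℝ (Fin n)))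
    (F G : Set (EuclideanSpace ℝ (Fin n)))
    (hF : F = {x | ∃ α : Fin t → ℝ, (∀ i : Fin t, (i : ℕ) < k → 0 < α i) ∧
      x = ∑ i ∈ Finset.univ.filter (fun i : Fin t => (i : ℕ) < k), α i • g i})
    (hG : G = {x | ∃ α : Fin t → ℝ, (∀ i, 0 < α i) ∧ x = ∑ i, α i • g i}) :
    ∀ w ∈ F, ∀ u ∈ ν '' G, ∃ ε : ℝ, 0 < ε ∧ w + ε • u ∈ G := by
  subst hF hG
  rintro _ ⟨α, hα, rfl⟩ _ ⟨_, ⟨β, hβ, rfl⟩, rfl⟩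
  have hW' : W = Submodule.span ℝ (g '' {i | (i : ℕ) < k}) := by
    rw [hW]; congr 1; ext v; simp [eq_comm]
  have hproj :
      ∑ i, β i • g i - ν (∑ i, β i • g i) ∈ Submodule.span ℝ (g '' {i | (i : ℕ) < k}) := by
    rw [← hW', hν]
    exact W.sub_orthogonalProjectionOnto_orthogonal_mem _
  obtain ⟨c, hc, hcx⟩ := Submodule.exists_fun_eq_sum_of_mem_span_image hproj
  set a : Fin t → ℝ := fun i => if (i : ℕ) < k then α i else 0
  have ha : ∀ i, 0 ≤ a i := fun i => by
    dsimp only [a]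
    split_ifs with hi
    exacts [(hα i hi).le, le_rfl]
  have hac : ∀ i, a i = 0 → c i = 0 := fun i hai => hc i fun hi =>
    (hα i hi).ne' (by simpa [a, show (i : ℕ) < k from hi] using hai)
  obtain ⟨ε, hε, δ, hδ, hsum⟩ := exists_pos_add_smul_sub_eq_sum_pos g ha hβ hac
  refine ⟨ε, hε, δ, hδ, ?_⟩
  rw [← hsum, hcx, sub_sub_cancel, Finset.sum_filter]
  simp only [a, ite_smul, zero_smul]

/-- Perturbation step in the proof of Lemma 3.10: for any point `w` of the
face `F` and any vector `u` in the projection `ν(G)` of the open cone `G`,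
some small positive multiple of `u` added to `w` lands in `G`. -/
theorem stmt11 (n t k : ℕ) (hk : k ≤ t)
    (g : Fin t → EuclideanSpace ℝ (Fin n))
    (hg : LinearIndependent ℝ g)
    (W : Submodule ℝ (EuclideanSpace ℝ (Fin n)))
    (hW : W = Submodule.span ℝ {v | ∃ i : Fin t, (i : ℕ) < k ∧ v = g i})
    (ν : EuclideanSpace ℝ (Fin n) → EuclideanSpace ℝ (Fin n))
    (hν : ∀ v, ν v = (Submodule.orthogonalProjectionOnto Wᗮ v : EuclideanSpace ℝ (Fin n)))
    (F G : Set (EuclideanSpace ℝ (Fin n)))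
    (hF : F = {x | ∃ α : Fin t → ℝ, (∀ i : Fin t, (i : ℕ) < k → 0 < α i) ∧
      x = ∑ i ∈ Finset.univ.filter (fun i : Fin t => (i : ℕ) < k), α i • g i})
    (hG : G = {x | ∃ α : Fin t → ℝ, (∀ i, 0 < α i) ∧ x = ∑ i, α i • g i}) :
    ∀ w ∈ F, ∀ u ∈ ν '' G, ∃ ε : ℝ, 0 < ε ∧ w + ε • u ∈ G :=
  stmt11_general n t k g W hW ν hν F G hF hG
end

section
/- In the cone-projection setup, the family (ν(g i))_{k ≤ (i:ℕ) < t} is linearly independent, and the image ν(G) of the open cone G under ν equals the open simplicial cone {Σ_{k ≤ (i:ℕ) < t} α_i • ν(g i) : all α_i > 0} on these projected vectors (interpreted as {0} when k = t). (This is the geometric content behind the fact, used in Lemma 3.9 and Lemma 3.10, that the projection ν_E maps cones of the fan around E to simplicial cones.) -/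
/-! The projection `ν` is the linear map `Wᗮ.starProjection`, whose kernel is `W`, the span of
the first `k` generators. A linear map whose kernel lies in the span of some members of a linearly
independent family keeps the remaining members independent, and it maps the open cone on the whole
family onto the open cone on the images of the members it does not kill: the coefficients of the
killed members are free, so any positive choice of them gives a preimage. -/

theorem LinearIndependent.map_subtype_of_ker_le_span {ι R M N : Type*} [Ring R]
    [AddCommGroup M] [Module R M] [AddCommGroup N] [Module R N] {g : ι → M}
    (hg : LinearIndependent R g) {p : ι → Prop} {f : M →ₗ[R] N}
    (hf : LinearMap.ker f ≤ Submodule.span R (g '' {i | ¬ p i})) :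
    LinearIndependent R (fun i : {i // p i} => f (g i)) := by
  refine (hg.comp _ Subtype.val_injective).map ?_
  rw [Set.range_comp, Subtype.range_coe_subtype]
  exact (hg.disjoint_span_image disjoint_compl_right).mono_right hf

theorem map_sum_smul_eq_sum_filter {ι R M N : Type*} [Semiring R]
    [AddCommMonoid M] [Module R M] [AddCommMonoid N] [Module R N] [Fintype ι]
    (f : M →ₗ[R] N) (g : ι → M) (p : ι → Prop) [DecidablePred p]
    (hf : ∀ i, ¬ p i → f (g i) = 0) (α : ι → R) :
    f (∑ i, α i • g i) = ∑ i ∈ Finset.univ.filter p, α i • f (g i) := by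
  rw [Finset.sum_filter, map_sum]
  refine Finset.sum_congr rfl fun i _ => ?_
  split_ifs with hi
  · exact map_smul f _ _
  · rw [map_smul, hf i hi, smul_zero]

theorem image_openCone_eq_of_map_eq_zero {ι R M N : Type*} [Semiring R] [PartialOrder R]
    [ZeroLEOneClass R] [NeZero (1 : R)]
    [AddCommMonoid M] [Module R M] [AddCommMonoid N] [Module R N] [Fintype ι]
    (f : M →ₗ[R] N) (g : ι → M) (p : ι → Prop) [DecidablePred p]
    (hf : ∀ i, ¬ p i → f (g i) = 0) :
    f '' {x | ∃ α : ι → R, (∀ i, 0 < α i) ∧ x = ∑ i, α i • g i} =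
      {x | ∃ α : ι → R, (∀ i, p i → 0 < α i) ∧ x = ∑ i ∈ Finset.univ.filter p, α i • f (g i)} := by
  ext x
  constructor
  · rintro ⟨_, ⟨α, hα, rfl⟩, rfl⟩
    exact ⟨α, fun i _ => hα i, map_sum_smul_eq_sum_filter f g p hf α⟩
  · rintro ⟨α, hα, rfl⟩
    set β : ι → R := fun i => if p i then α i else 1
    refine ⟨∑ i, β i • g i, ⟨β, fun i => ?_, rfl⟩, ?_⟩
    · by_cases hi : p i
      · simpa [β, hi] using hα i hi
      · simp [β, hi]
    · rw [map_sum_smul_eq_sum_filter f g p hf β]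
      refine Finset.sum_congr rfl fun i hi => ?_
      simp [β, (Finset.mem_filter.mp hi).2]

theorem stmt12_general (n t k : ℕ)
    (g : Fin t → EuclideanSpace ℝ (Fin n))
    (hg : LinearIndependent ℝ g)
    (W : Submodule ℝ (EuclideanSpace ℝ (Fin n)))
    (hW : W = Submodule.span ℝ {v | ∃ i : Fin t, (i : ℕ) < k ∧ v = g i})
    (ν : EuclideanSpace ℝ (Fin n) → EuclideanSpace ℝ (Fin n))
    (hν : ∀ v, ν v = (Submodule.orthogonalProjectionOnto Wᗮ v : EuclideanSpace ℝ (Fin n)))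
    (G : Set (EuclideanSpace ℝ (Fin n)))
    (hG : G = {x | ∃ α : Fin t → ℝ, (∀ i, 0 < α i) ∧ x = ∑ i, α i • g i}) :
    LinearIndependent ℝ (fun i : {i : Fin t // k ≤ (i : ℕ)} => ν (g i)) ∧
    ν '' G = {x | ∃ α : Fin t → ℝ, (∀ i : Fin t, k ≤ (i : ℕ) → 0 < α i) ∧
      x = ∑ i ∈ Finset.univ.filter (fun i : Fin t => k ≤ (i : ℕ)), α i • ν (g i)} := by
  have hν_eq : ν = Wᗮ.starProjection.toLinearMap := funext hν
  have hW_eq : W = Submodule.span ℝ (g '' {i | ¬ k ≤ (i : ℕ)}) := by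
    rw [hW]
    congr 1
    ext v
    simp [eq_comm]
  have hker : LinearMap.ker Wᗮ.starProjection.toLinearMap = W := by
    rw [Submodule.ker_starProjection, Submodule.orthogonal_orthogonal]
  subst hν_eq hG
  refine ⟨hg.map_subtype_of_ker_le_span (hker.trans hW_eq).le, ?_⟩
  refine image_openCone_eq_of_map_eq_zero Wᗮ.starProjection.toLinearMap g _ fun i hi => ?_
  rw [← LinearMap.mem_ker, hker, hW_eq]
  exact Submodule.subset_span ⟨i, hi, rfl⟩

/-- Geometric content of Lemmas 3.9 and 3.10: the projections `ν(g i)` for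
`k ≤ i < t` are linearly independent, and the image `ν(G)` of the open cone
`G` under the orthogonal projection `ν` is the open simplicial cone on these
projected vectors. -/
theorem stmt12 (n t k : ℕ) (hk : k ≤ t)
    (g : Fin t → EuclideanSpace ℝ (Fin n))
    (hg : LinearIndependent ℝ g)
    (W : Submodule ℝ (EuclideanSpace ℝ (Fin n)))
    (hW : W = Submodule.span ℝ {v | ∃ i : Fin t, (i : ℕ) < k ∧ v = g i})
    (ν : EuclideanSpace ℝ (Fin n) → EuclideanSpace ℝ (Fin n))
    (hν : ∀ v, ν v = (Submodule.orthogonalProjectionOnto Wᗮ v : EuclideanSpace ℝ (Fin n)))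
    (F G : Set (EuclideanSpace ℝ (Fin n)))
    (hF : F = {x | ∃ α : Fin t → ℝ, (∀ i : Fin t, (i : ℕ) < k → 0 < α i) ∧
      x = ∑ i ∈ Finset.univ.filter (fun i : Fin t => (i : ℕ) < k), α i • g i})
    (hG : G = {x | ∃ α : Fin t → ℝ, (∀ i, 0 < α i) ∧ x = ∑ i, α i • g i}) :
    LinearIndependent ℝ (fun i : {i : Fin t // k ≤ (i : ℕ)} => ν (g i)) ∧
    ν '' G = {x | ∃ α : Fin t → ℝ, (∀ i : Fin t, k ≤ (i : ℕ) → 0 < α i) ∧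
      x = ∑ i ∈ Finset.univ.filter (fun i : Fin t => k ≤ (i : ℕ)), α i • ν (g i)} :=
  stmt12_general n t k g hg W hW ν hν G hG
end

section
/- Let g : Fin t → ℝⁿ be a linearly independent family, fix k ≤ t, let W be the linear span of {g i : (i : ℕ) < k}, and let ν : ℝⁿ → ℝⁿ be the orthogonal projection onto Wᗮ. For subsets I, J ⊆ Fin t, each containing every index i with (i : ℕ) < k, if I ≠ J then the images ν(C_I) and ν(C_J) of the open simplicial cones C_I and C_J under ν are disjoint. (This realises, within one simplicial fan, the dichotomy used in the proof of Lemma 3.10 that images of cones under ν_E are either disjoint or equal.) -/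
theorem Submodule.sub_mem_of_orthogonalProjectionOnto_orthogonal_eq {𝕜 E : Type*} [RCLike 𝕜]
    [NormedAddCommGroup E] [InnerProductSpace 𝕜 E] {K : Submodule 𝕜 E}
    [K.HasOrthogonalProjection] {x y : E}
    (h : Kᗮ.orthogonalProjectionOnto x = Kᗮ.orthogonalProjectionOnto y) : x - y ∈ K := by
  rw [← K.orthogonal_orthogonal, ← orthogonalProjectionOnto_eq_zero_iff, map_sub, h, sub_self]

theorem LinearIndependent.eq_zero_of_sum_smul_mem_span_image {ι R M : Type*} [Fintype ι]
    [Ring R] [AddCommGroup M] [Module R M] {v : ι → M} (hv : LinearIndependent R v)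
    {c : ι → R} {s : Set ι} (h : ∑ i, c i • v i ∈ Submodule.span R (v '' s)) {i : ι}
    (hi : i ∉ s) : c i = 0 := by
  obtain ⟨l, hls, hl⟩ := (Finsupp.mem_span_image_iff_linearCombination R).mp h
  have hlc : l = Finsupp.equivFunOnFinite.symm c := hv <| by
    rw [hl, Finsupp.linearCombination_apply, Finsupp.sum_fintype _ _ (by simp)]
    simp
  simpa [hlc] using Finsupp.notMem_support_iff.mp (mt (@hls i) hi)

theorem exists_coeff_of_mem_openCone {n t : ℕ} {g : Fin t → EuclideanSpace ℝ (Fin n)}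
    {I : Finset (Fin t)} {x : EuclideanSpace ℝ (Fin n)} (hx : x ∈ openCone g I) :
    ∃ α : Fin t → ℝ, (∀ i, 0 < α i ↔ i ∈ I) ∧ x = ∑ i, α i • g i := by
  obtain ⟨α, hα, rfl⟩ := hx
  refine ⟨fun i => if i ∈ I then α i else 0, fun i => ?_, ?_⟩
  · by_cases hi : i ∈ I <;> simp [hi, hα]
  · simp [ite_smul, Finset.sum_ite_mem]

theorem stmt13_general (n t k : ℕ)
    (g : Fin t → EuclideanSpace ℝ (Fin n))
    (hg : LinearIndependent ℝ g)
    (W : Submodule ℝ (EuclideanSpace ℝ (Fin n)))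
    (hW : W = Submodule.span ℝ {v | ∃ i : Fin t, (i : ℕ) < k ∧ v = g i})
    (ν : EuclideanSpace ℝ (Fin n) → EuclideanSpace ℝ (Fin n))
    (hν : ∀ v, ν v = (Submodule.orthogonalProjection Wᗮ v : EuclideanSpace ℝ (Fin n)))
    (I J : Finset (Fin t))
    (hI : ∀ i : Fin t, (i : ℕ) < k → i ∈ I)
    (hJ : ∀ i : Fin t, (i : ℕ) < k → i ∈ J)
    (hIJ : I ≠ J) :
    Disjoint (ν '' openCone g I) (ν '' openCone g J) := by
  rw [Set.disjoint_left]
  rintro _ ⟨x, hx, rfl⟩ ⟨y, hy, hνyx⟩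
  obtain ⟨α, hαI, rfl⟩ := exists_coeff_of_mem_openCone hx
  obtain ⟨γ, hγJ, rfl⟩ := exists_coeff_of_mem_openCone hy
  have hW' : W = Submodule.span ℝ (g '' {i | (i : ℕ) < k}) := by
    rw [hW]
    congr 1
    ext v
    simp [eq_comm]
  have hdiff : ∑ i, (γ i - α i) • g i ∈ Submodule.span ℝ (g '' {i | (i : ℕ) < k}) := by
    rw [← hW']
    simp only [sub_smul, Finset.sum_sub_distrib]
    exact Submodule.sub_mem_of_orthogonalProjectionOnto_orthogonal_eq
      (Subtype.ext (by simpa only [hν] using hνyx))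
  refine hIJ (Finset.ext fun i => ?_)
  by_cases hi : (i : ℕ) < k
  · exact iff_of_true (hI i hi) (hJ i hi)
  · rw [← hαI, ← hγJ, sub_eq_zero.mp (hg.eq_zero_of_sum_smul_mem_span_image hdiff hi)]

/-- Within one simplicial fan, images under the orthogonal projection `ν` of
distinct cones containing the face indexed by `{i | i < k}` are disjoint
(the dichotomy used in the proof of Lemma 3.10). -/
theorem stmt13 (n t k : ℕ) (hk : k ≤ t)
    (g : Fin t → EuclideanSpace ℝ (Fin n))
    (hg : LinearIndependent ℝ g)
    (W : Submodule ℝ (EuclideanSpace ℝ (Fin n)))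
    (hW : W = Submodule.span ℝ {v | ∃ i : Fin t, (i : ℕ) < k ∧ v = g i})
    (ν : EuclideanSpace ℝ (Fin n) → EuclideanSpace ℝ (Fin n))
    (hν : ∀ v, ν v = (Submodule.orthogonalProjection Wᗮ v : EuclideanSpace ℝ (Fin n)))
    (I J : Finset (Fin t))
    (hI : ∀ i : Fin t, (i : ℕ) < k → i ∈ I)
    (hJ : ∀ i : Fin t, (i : ℕ) < k → i ∈ J)
    (hIJ : I ≠ J) :
    Disjoint (ν '' openCone g I) (ν '' openCone g J) :=
  stmt13_general n t k g hg W hW ν hν I J hI hJ hIJ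
end
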